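/- The word 21212 is forbidden below 3.3341579: every bi-infinite sequence B over {1,2} that contains the block 21212 has Markov value m(B) ≥ 3.3341579 > 2√2026/27 + 10^{-6}. -/
import Mathlib


open Filter

/-- The `n`-th convergent of the continued fraction `[a 0; a 1, a 2, ...]`. -/
noncomputable def cfConv : ℕ → (ℕ → ℕ) → ℝ
  | 0, a => a 0
  | n+1, a => a 0 + 1 / cfConv n (fun i => a (i+1))

/-- Value of the infinite continued fraction `[a 0; a 1, a 2, ...]` (limit of convergents). -/
noncomputable def cfVal (a : ℕ → ℕ) : ℝ := limUnder atTop (fun n => cfConv n a)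

/-- `λ_k(a) = [a_k; a_{k+1}, …] + [0; a_{k-1}, a_{k-2}, …]`. -/
noncomputable def lam (a : ℤ → ℕ) (k : ℤ) : ℝ :=
  cfVal (fun n => a (k + n)) + (cfVal (fun n => a (k - 1 - n)))⁻¹

/-- The Markov value `m(a) = sup_k λ_k(a)`. -/
noncomputable def markov (a : ℤ → ℕ) : ℝ := ⨆ k : ℤ, lam a k

/-- The periodic bi-infinite sequence with period the word `w` (`w` at positions `0..len-1`). -/
def periodize (w : List ℕ) : ℤ → ℕ := fun n => w.getD (n % (w.length : ℤ)).toNat 0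

/-- The finite word `u` occurs as a consecutive block in the bi-infinite sequence `a`. -/
def Occurs (u : List ℕ) (a : ℤ → ℕ) : Prop :=
  ∃ k : ℤ, ∀ i : ℕ, i < u.length → a (k + (i : ℤ)) = u.getD i 0

/-- Sequences with all entries in {1,2}. -/
def Good (a : ℕ → ℕ) : Prop := ∀ n, a n = 1 ∨ a n = 2

lemma Good.shift {a : ℕ → ℕ} (h : Good a) : Good (fun i => a (i+1)) := fun n => h _

lemma Good.one_le {a : ℕ → ℕ} (h : Good a) (n : ℕ) : (1:ℝ) ≤ (a n : ℝ) := by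
  rcases h n with h'|h' <;> norm_num [h']

lemma Good.le_two {a : ℕ → ℕ} (h : Good a) (n : ℕ) : (a n : ℝ) ≤ 2 := by
  rcases h n with h'|h' <;> norm_num [h']

lemma cfConv_bounds : ∀ (n : ℕ) (a : ℕ → ℕ), Good a → 1 ≤ cfConv n a ∧ cfConv n a ≤ 3 := by
  intro n
  induction n with
  | zero => intro a h; exact ⟨h.one_le 0, (h.le_two 0).trans (by norm_num)⟩
  | succ n ih =>
    intro a h
    obtain ⟨h1, h2⟩ := ih _ h.shift
    have hpos : (0:ℝ) < cfConv n (fun i => a (i+1)) := by linarith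
    have e : cfConv (n+1) a = a 0 + 1 / cfConv n (fun i => a (i+1)) := rfl
    rw [e]
    have hd1 : 1 / cfConv n (fun i => a (i+1)) ≤ 1 := by
      rw [div_le_one hpos]; linarith
    have hd2 : (1:ℝ)/3 ≤ 1 / cfConv n (fun i => a (i+1)) := by
      apply div_le_div_of_nonneg_left (by norm_num) hpos h2 |>.trans_eq rfl
    have := h.one_le 0
    have := h.le_two 0
    constructor <;> linarith

lemma cfConv_succ_ge (n : ℕ) (a : ℕ → ℕ) (h : Good a) : 4/3 ≤ cfConv (n+1) a := by
  obtain ⟨h1, h2⟩ := cfConv_bounds n _ h.shift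
  have hpos : (0:ℝ) < cfConv n (fun i => a (i+1)) := by linarith
  have e : cfConv (n+1) a = a 0 + 1 / cfConv n (fun i => a (i+1)) := rfl
  rw [e]
  have hd2 : (1:ℝ)/3 ≤ 1 / cfConv n (fun i => a (i+1)) :=
    div_le_div_of_nonneg_left (by norm_num) hpos h2
  have := h.one_le 0
  linarith

lemma cfConv_diff : ∀ (n : ℕ) (a : ℕ → ℕ), Good a →
    |cfConv (n+1) a - cfConv n a| ≤ (3/4)^n := by
  intro n
  induction n with
  | zero =>
    intro a h
    have e : cfConv 1 a = a 0 + 1 / cfConv 0 (fun i => a (i+1)) := rfl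
    have e0 : cfConv 0 a = a 0 := rfl
    have e0' : (cfConv 0 fun i => a (i+1)) = a 1 := rfl
    rw [e, e0, e0']
    have h1 : (1:ℝ) ≤ a 1 := h.one_le 1
    have e3 : ((a 0 : ℝ) + 1 / (a 1 : ℝ)) - (a 0 : ℝ) = 1 / (a 1 : ℝ) := by ring
    rw [e3, abs_of_nonneg (by positivity), pow_zero, div_le_one (by linarith)]
    exact h1
  | succ n ih =>
    intro a h
    have hs := h.shift
    have hd := ih _ hs
    obtain ⟨hb1, hb2⟩ := cfConv_bounds n _ hs
    have hg : 4/3 ≤ cfConv (n+1) (fun i => a (i+1)) := cfConv_succ_ge n _ hs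
    have hp1 : (0:ℝ) < cfConv n (fun i => a (i+1)) := by linarith
    have hp2 : (0:ℝ) < cfConv (n+1) (fun i => a (i+1)) := by linarith
    have e1 : cfConv (n+2) a = a 0 + 1 / cfConv (n+1) (fun i => a (i+1)) := rfl
    have e2 : cfConv (n+1) a = a 0 + 1 / cfConv n (fun i => a (i+1)) := rfl
    rw [e1, e2]
    have key : a 0 + 1 / cfConv (n+1) (fun i => a (i+1)) - (a 0 + 1 / cfConv n (fun i => a (i+1)))
        = (cfConv n (fun i => a (i+1)) - cfConv (n+1) (fun i => a (i+1))) /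
          (cfConv (n+1) (fun i => a (i+1)) * cfConv n (fun i => a (i+1))) := by
      field_simp
      ring
    rw [key, abs_div, abs_sub_comm]
    have hprod : (4:ℝ)/3 ≤ cfConv (n+1) (fun i => a (i+1)) * cfConv n (fun i => a (i+1)) := by
      nlinarith
    have habs : |cfConv (n+1) (fun i => a (i+1)) * cfConv n (fun i => a (i+1))|
        = cfConv (n+1) (fun i => a (i+1)) * cfConv n (fun i => a (i+1)) :=
      abs_of_pos (by positivity)
    rw [habs]
    calc |cfConv (n+1) (fun i => a (i+1)) - cfConv n (fun i => a (i+1))| /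
          (cfConv (n+1) (fun i => a (i+1)) * cfConv n (fun i => a (i+1)))
        ≤ (3/4)^n / (4/3) := by
          apply div_le_div₀ (by positivity) hd (by norm_num) hprod
      _ = (3/4)^(n+1) := by ring

lemma cfVal_tendsto {a : ℕ → ℕ} (h : Good a) :
    Tendsto (fun n => cfConv n a) atTop (nhds (cfVal a)) := by
  have hc : CauchySeq (fun n => cfConv n a) := by
    apply cauchySeq_of_le_geometric (3/4) 1 (by norm_num)
    intro n
    rw [Real.dist_eq, abs_sub_comm, one_mul]
    exact cfConv_diff n a h
  obtain ⟨l, hl⟩ := cauchySeq_tendsto_of_complete hc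
  rwa [cfVal, hl.limUnder_eq]

lemma cfVal_ge_43 {a : ℕ → ℕ} (h : Good a) : 4/3 ≤ cfVal a := by
  apply ge_of_tendsto (cfVal_tendsto h)
  filter_upwards [eventually_ge_atTop 1] with n hn
  obtain ⟨m, rfl⟩ := Nat.exists_eq_add_of_le hn
  rw [Nat.add_comm]
  exact cfConv_succ_ge m a h

lemma cfVal_le_3 {a : ℕ → ℕ} (h : Good a) : cfVal a ≤ 3 :=
  le_of_tendsto (cfVal_tendsto h) (Eventually.of_forall fun n => (cfConv_bounds n a h).2)

lemma cfVal_eq {a : ℕ → ℕ} (h : Good a) :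
    cfVal a = a 0 + 1 / cfVal (fun i => a (i+1)) := by
  have hs := cfVal_tendsto h.shift
  have hpos : (0:ℝ) < cfVal (fun i => a (i+1)) := lt_of_lt_of_le (by norm_num) (cfVal_ge_43 h.shift)
  have h2 : Tendsto (fun n => cfConv (n+1) a) atTop
      (nhds ((a 0 : ℝ) + 1 / cfVal (fun i => a (i+1)))) :=
    tendsto_const_nhds.add (tendsto_const_nhds.div hs hpos.ne')
  have h1 : Tendsto (fun n => cfConv (n+1) a) atTop (nhds (cfVal a)) :=
    (cfVal_tendsto h).comp (tendsto_add_atTop_nat 1)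
  exact tendsto_nhds_unique h1 h2

lemma cfVal_bounds {a : ℕ → ℕ} (h : Good a) :
    (a 0 : ℝ) + 1/3 ≤ cfVal a ∧ cfVal a ≤ (a 0 : ℝ) + 3/4 := by
  have hs := h.shift
  have h43 := cfVal_ge_43 hs
  have h3 := cfVal_le_3 hs
  have hpos : (0:ℝ) < cfVal (fun i => a (i+1)) := by linarith
  rw [cfVal_eq h]
  constructor
  · have : (1:ℝ)/3 ≤ 1 / cfVal (fun i => a (i+1)) :=
      div_le_div_of_nonneg_left (by norm_num) hpos h3
    linarith
  · have : 1 / cfVal (fun i => a (i+1)) ≤ 3/4 := by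
      rw [div_le_iff₀ hpos]; linarith
    linarith

/-- Lower bound for `[2;1,2,…]` with tail in {1,2}. -/
lemma cfVal_212_ge {a : ℕ → ℕ} (h : Good a) (h0 : a 0 = 2) (h1 : a 1 = 1) (h2 : a 2 = 2) :
    2 + 7/10 ≤ cfVal a := by
  have hs1 : Good (fun i => a (i+1)) := h.shift
  have hs2 : Good (fun i => a (i+1+1)) := hs1.shift
  have hb2 := cfVal_bounds hs2
  have e2 : ((fun i => a (i+1+1)) 0 : ℝ) = 2 := by simp [h2]
  rw [e2] at hb2
  have hp2 : (0:ℝ) < cfVal (fun i => a (i+1+1)) := by linarith [hb2.1]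
  have hv1 : cfVal (fun i => a (i+1)) = (a 1 : ℝ) + 1 / cfVal (fun i => a (i+1+1)) :=
    cfVal_eq hs1
  have hv1le : cfVal (fun i => a (i+1)) ≤ 10/7 := by
    rw [hv1, h1]
    have : 1 / cfVal (fun i => a (i+1+1)) ≤ 3/7 := by
      rw [div_le_iff₀ hp2]; linarith [hb2.1]
    push_cast
    linarith
  have hp1 : (0:ℝ) < cfVal (fun i => a (i+1)) :=
    lt_of_lt_of_le (by norm_num) (cfVal_ge_43 hs1)
  have hv0 : cfVal a = (a 0 : ℝ) + 1 / cfVal (fun i => a (i+1)) := cfVal_eq h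
  rw [hv0, h0]
  have : (7:ℝ)/10 ≤ 1 / cfVal (fun i => a (i+1)) := by
    rw [le_div_iff₀ hp1]; linarith
  push_cast
  linarith

/-- Lower bound for `[0;1,2,…]` with tail in {1,2}. -/
lemma cfVal_12_inv_ge {a : ℕ → ℕ} (h : Good a) (h0 : a 0 = 1) (h1 : a 1 = 2) :
    7/10 ≤ (cfVal a)⁻¹ := by
  have hs1 : Good (fun i => a (i+1)) := h.shift
  have hb1 := cfVal_bounds hs1
  have e1 : ((fun i => a (i+1)) 0 : ℝ) = 2 := by simp [h1]
  rw [e1] at hb1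
  have hp1 : (0:ℝ) < cfVal (fun i => a (i+1)) := by linarith [hb1.1]
  have hv0 : cfVal a = (a 0 : ℝ) + 1 / cfVal (fun i => a (i+1)) := cfVal_eq h
  have hle : cfVal a ≤ 10/7 := by
    rw [hv0, h0]
    have : 1 / cfVal (fun i => a (i+1)) ≤ 3/7 := by
      rw [div_le_iff₀ hp1]; linarith [hb1.1]
    push_cast
    linarith
  have hp0 : (0:ℝ) < cfVal a := lt_of_lt_of_le (by norm_num) (cfVal_ge_43 h)
  rw [← one_div]
  calc (7:ℝ)/10 = 1 / (10/7) := by norm_num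
    _ ≤ 1 / cfVal a := one_div_le_one_div_of_le hp0 hle

lemma lam_le {a : ℤ → ℕ} (ha : ∀ n, a n = 1 ∨ a n = 2) (j : ℤ) : lam a j ≤ 15/4 := by
  have hF : Good (fun n : ℕ => a (j + n)) := fun n => ha _
  have hG : Good (fun n : ℕ => a (j - 1 - n)) := fun n => ha _
  have h1 : cfVal (fun n : ℕ => a (j + n)) ≤ 3 := cfVal_le_3 hF
  have h2 : (4:ℝ)/3 ≤ cfVal (fun n : ℕ => a (j - 1 - n)) := cfVal_ge_43 hG
  have hp : (0:ℝ) < cfVal (fun n : ℕ => a (j - 1 - n)) := by linarith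
  have h3 : (cfVal (fun n : ℕ => a (j - 1 - n)))⁻¹ ≤ 3/4 := by
    rw [← one_div]
    calc 1 / cfVal (fun n : ℕ => a (j - 1 - n)) ≤ 1 / (4/3) :=
          one_div_le_one_div_of_le (by norm_num) h2
      _ = 3/4 := by norm_num
  unfold lam
  linarith

/-- The word `21212` is forbidden below `3.3341579`: any `B ∈ {1,2}^ℤ` containing the
block `21212` has Markov value at least `3.3341579 > 2√2026/27 + 10⁻⁶`. -/
theorem forbidden_21212 (B : ℤ → ℕ) (hB : ∀ n, B n = 1 ∨ B n = 2)
    (h : Occurs [2,1,2,1,2] B) :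
    (3.3341579 : ℝ) ≤ markov B ∧
    2 * Real.sqrt 2026 / 27 + 1/1000000 < (3.3341579 : ℝ) := by
  constructor
  · obtain ⟨k, hk⟩ := h
    have h0 : B k = 2 := by simpa using hk 0 (by norm_num)
    have h1 : B (k+1) = 1 := by simpa using hk 1 (by norm_num)
    have h2 : B (k+2) = 2 := by simpa using hk 2 (by norm_num)
    have h3 : B (k+3) = 1 := by simpa using hk 3 (by norm_num)
    have h4 : B (k+4) = 2 := by simpa using hk 4 (by norm_num)
    have hF : Good (fun n : ℕ => B (k + 2 + n)) := fun n => hB _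
    have hG : Good (fun n : ℕ => B (k + 2 - 1 - n)) := fun n => hB _
    have hF0 : (fun n : ℕ => B (k + 2 + n)) 0 = 2 := by
      show B (k + 2 + ((0:ℕ):ℤ)) = 2; norm_num [h2]
    have hF1 : (fun n : ℕ => B (k + 2 + n)) 1 = 1 := by
      show B (k + 2 + ((1:ℕ):ℤ)) = 1
      rw [show k + 2 + ((1:ℕ):ℤ) = k + 3 by push_cast; ring]; exact h3
    have hF2 : (fun n : ℕ => B (k + 2 + n)) 2 = 2 := by
      show B (k + 2 + ((2:ℕ):ℤ)) = 2
      rw [show k + 2 + ((2:ℕ):ℤ) = k + 4 by push_cast; ring]; exact h4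
    have hG0 : (fun n : ℕ => B (k + 2 - 1 - n)) 0 = 1 := by
      show B (k + 2 - 1 - ((0:ℕ):ℤ)) = 1
      rw [show k + 2 - 1 - ((0:ℕ):ℤ) = k + 1 by push_cast; ring]; exact h1
    have hG1 : (fun n : ℕ => B (k + 2 - 1 - n)) 1 = 2 := by
      show B (k + 2 - 1 - ((1:ℕ):ℤ)) = 2
      rw [show k + 2 - 1 - ((1:ℕ):ℤ) = k by push_cast; ring]; exact h0
    have hlam : (3.3341579 : ℝ) ≤ lam B (k + 2) := by
      have hFge : 2 + 7/10 ≤ cfVal (fun n : ℕ => B (k + 2 + n)) :=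
        cfVal_212_ge hF hF0 hF1 hF2
      have hGge : 7/10 ≤ (cfVal (fun n : ℕ => B (k + 2 - 1 - n)))⁻¹ :=
        cfVal_12_inv_ge hG hG0 hG1
      unfold lam
      norm_num
      linarith
    have hbdd : BddAbove (Set.range (lam B)) := by
      refine ⟨15/4, ?_⟩
      rintro x ⟨j, rfl⟩
      exact lam_le hB j
    exact hlam.trans (le_ciSup hbdd (k + 2))
  · have hs : Real.sqrt 2026 < 45.0111107 := by
      rw [show (45.0111107:ℝ) = 45.0111107 from rfl]
      rw [Real.sqrt_lt' (by norm_num)]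
      norm_num
    nlinarith [hs]
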